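/- Fix θ0, θ1, θi1, θi2, θi3 ∈ ℂ with 2θ0 + 2θ1 + 2θi1 + θi2 + θi3 = 0, fix t ∈ ℂ∖{0}, and let Q, P be 2×2 complex matrices satisfying the commutation constraint PQ − QP = (θ0 + θ1 + θi1 + θi2)·K, where K := diag(1,−1). Then there exists a function c of ε (independent of Q and P) such that, as ε → 0 with ε ≠ 0, ε·HVIMat(θ0, 1/ε, θ1 − 1/ε, θi1, θi2; 1 + εt; I − εP, (1/ε)Q) − c(ε) converges to HVMat(θ0, θ1, θi1; t; Q, P). (Degeneration of the sixth matrix Painlevé system to the fifth matrix Painlevé system, corresponding to the confluence 22,22,22,211 → (2)(2),22,211.) -/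

import Mathlib

open Filter Topology Matrix

/-- `K = diag(1,−1)`. -/
noncomputable def Kmat : Matrix (Fin 2) (Fin 2) ℂ := Matrix.diagonal ![1, -1]

/-- The matrix Painlevé VI Hamiltonian. -/
noncomputable def HVIMat (θ0 θ1 θt θi1 θi2 t : ℂ) (Q P : Matrix (Fin 2) (Fin 2) ℂ) : ℂ :=
  Matrix.trace (Q * (Q - 1) * (Q - t • (1 : Matrix (Fin 2) (Fin 2) ℂ)) * P ^ 2
      + (((θ0 + 1) • (1 : Matrix (Fin 2) (Fin 2) ℂ)
            - ((θ0 + θ1 + θt) + θi1 + θi2) • Kmat) * (Q * (Q - 1)) * P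
          + θt • ((Q - 1) * (Q - t • (1 : Matrix (Fin 2) (Fin 2) ℂ)) * P)
          + ((θ0 + θ1 + θt) + 2 * θi1 - 1) •
              (Q * (Q - t • (1 : Matrix (Fin 2) (Fin 2) ℂ)) * P))
      + (((θ0 + θ1 + θt) + θi1) * (θ0 + θt + θi1)) • Q) / (t * (t - 1))

/-- The matrix Painlevé V Hamiltonian. -/
noncomputable def HVMat (θ0 θ1 θi1 t : ℂ) (Q P : Matrix (Fin 2) (Fin 2) ℂ) : ℂ :=
  Matrix.trace (P * (P + t • (1 : Matrix (Fin 2) (Fin 2) ℂ)) * Q * (Q - 1)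
      + (θ0 + θ1 + θi1) • P
      - ((θ0 + θ1 + 2 * θi1 - 1) * t) • Q
      - (2 * θ0 + θ1 + 2 * θi1) • (P * Q)) / t

/-!
Under `Q ↦ 1 - ε P`, `P ↦ Q / ε`, `t ↦ 1 + ε t` the factors `Q - 1` and `Q - t` of `HVIMat`
become `-ε P` and `-ε (P + t)`, so `ε • HVIMat` is a rational function of `ε` whose only
singular part is a scalar pole. Removing it leaves
`(t HVMat + μ tr (K P Q) - μ² + O(ε)) / ((1 + ε t) t)` with `μ = θ0 + θ1 + θi1 + θi2`, and the
commutation constraint `[P, Q] = μ K` forces `μ tr (K P Q) = μ²` through the identity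
`2 tr ([P, Q] P Q) = tr ([P, Q]²)` and `K² = 1`.
-/

theorem Matrix.two_mul_trace_commutator_mul {n R : Type*} [Fintype n] [CommRing R]
    (P Q : Matrix n n R) :
    2 * trace ((P * Q - Q * P) * (P * Q)) = trace ((P * Q - Q * P) * (P * Q - Q * P)) := by
  have hcyc : trace (Q * P * (P * Q)) = trace (P * Q * (Q * P)) := trace_mul_comm _ _
  have hswap : trace (Q * P * (Q * P)) = trace (P * Q * (P * Q)) := by
    rw [Matrix.mul_assoc, trace_mul_comm, Matrix.mul_assoc, Matrix.mul_assoc, Matrix.mul_assoc]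
  simp only [sub_mul, mul_sub, trace_sub, hcyc, hswap]
  ring

theorem Kmat_mul_self : Kmat * Kmat = 1 := by
  simp [Kmat, Matrix.diagonal_mul_diagonal, ← Matrix.diagonal_one]

theorem mul_trace_Kmat_mul_of_commutator_eq {μ : ℂ} {P Q : Matrix (Fin 2) (Fin 2) ℂ}
    (hPQ : P * Q - Q * P = μ • Kmat) : μ * trace (Kmat * P * Q) = μ ^ 2 := by
  have h := Matrix.two_mul_trace_commutator_mul P Q
  rw [hPQ, smul_mul_smul, Kmat_mul_self, smul_mul_assoc] at h
  simp only [trace_smul, trace_one, Fintype.card_fin, smul_eq_mul] at h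
  rw [Matrix.mul_assoc]
  linear_combination h / 2

/-- The `Q`-term of `HVIMat` contributes the pole and `2 (θ0 + θ1 + θi1)²`; the summand
`(θ0 + θ1 + θi1 + θi2)²` is the value of the `Kmat`-term under the commutation constraint. -/
noncomputable def degenerationShift (θ0 θ1 θi1 θi2 t ε : ℂ) : ℂ :=
  (2 * (θ0 + θ1 + θi1) ^ 2 + (θ0 + θ1 + θi1 + θi2) ^ 2 - 2 * (θ0 + θ1 + θi1) / ε)
    / ((1 + ε * t) * t)

theorem exists_mul_HVIMat_rescale_sub_degenerationShift (θ0 θ1 θi1 θi2 t : ℂ)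
    (Q P : Matrix (Fin 2) (Fin 2) ℂ) (ht : t ≠ 0) :
    ∃ R : ℂ, ∀ ε : ℂ, ε ≠ 0 → 1 + ε * t ≠ 0 →
      ε * HVIMat θ0 (1 / ε) (θ1 - 1 / ε) θi1 θi2 (1 + ε * t) (1 - ε • P) ((1 / ε) • Q)
        - degenerationShift θ0 θ1 θi1 θi2 t ε
      = (t * HVMat θ0 θ1 θi1 t Q P + (θ0 + θ1 + θi1 + θi2) * trace (Kmat * P * Q)
          - (θ0 + θ1 + θi1 + θi2) ^ 2 + ε * R) / ((1 + ε * t) * t) := by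
  refine ⟨trace (-(P * P * (P + t • 1) * Q ^ 2)
      + ((θ0 + 1) • 1 - (θ0 + θ1 + θi1 + θi2) • Kmat) * P * P * Q
      + (2 * θ1 + θ0 + 2 * θi1 - 1) • (P * (P + t • 1) * Q))
      - (θ0 + θ1 + θi1) ^ 2 * trace P, fun ε hε htε => ?_⟩
  rw [HVIMat, HVMat, degenerationShift, show (1 + ε * t) - 1 = ε * t by ring]
  simp only [Matrix.trace_fin_two, Matrix.mul_apply, Fin.sum_univ_two, Matrix.sub_apply,
    Matrix.add_apply, Matrix.neg_apply, Matrix.smul_apply, Matrix.one_apply, Kmat,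
    Matrix.diagonal_apply, smul_eq_mul, Fin.isValue, Matrix.cons_val_zero, Matrix.cons_val_one,
    pow_two, one_ne_zero, zero_ne_one, if_false, reduceIte]
  field_simp
  ring

theorem tendsto_affine_div_nhdsNE {t : ℂ} (ht : t ≠ 0) (A R : ℂ) :
    Tendsto (fun ε : ℂ => (t * A + ε * R) / ((1 + ε * t) * t)) (𝓝[≠] 0) (𝓝 A) := by
  have hcont : ContinuousAt (fun ε : ℂ => (t * A + ε * R) / ((1 + ε * t) * t)) 0 :=
    ContinuousAt.div (by fun_prop) (by fun_prop) (by simpa using ht)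
  have hval : (t * A + 0 * R) / ((1 + 0 * t) * t) = A := by simp [ht]
  simpa only [hval] using hcont.tendsto.mono_left nhdsWithin_le_nhds

theorem stmt19_general (θ0 θ1 θi1 θi2 : ℂ)
    (t : ℂ) (ht : t ≠ 0) :
    ∃ c : ℂ → ℂ, ∀ Q P : Matrix (Fin 2) (Fin 2) ℂ,
      P * Q - Q * P = (θ0 + θ1 + θi1 + θi2) • Kmat →
      Tendsto (fun ε : ℂ =>
          ε * HVIMat θ0 (1 / ε) (θ1 - 1 / ε) θi1 θi2 (1 + ε * t)
              ((1 : Matrix (Fin 2) (Fin 2) ℂ) - ε • P) ((1 / ε) • Q)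
            - c ε)
        (𝓝[≠] (0 : ℂ))
        (𝓝 (HVMat θ0 θ1 θi1 t Q P)) := by
  refine ⟨degenerationShift θ0 θ1 θi1 θi2 t, fun Q P hPQ => ?_⟩
  obtain ⟨R, hR⟩ := exists_mul_HVIMat_rescale_sub_degenerationShift θ0 θ1 θi1 θi2 t Q P ht
  have hK := mul_trace_Kmat_mul_of_commutator_eq hPQ
  have hne : ∀ᶠ ε in 𝓝[≠] (0 : ℂ), ε ≠ 0 ∧ 1 + ε * t ≠ 0 :=
    eventually_mem_nhdsWithin.and <| eventually_nhdsWithin_of_eventually_nhds <|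
      (show ContinuousAt (fun ε : ℂ => 1 + ε * t) 0 by fun_prop).eventually_ne (by simp)
  refine (tendsto_affine_div_nhdsNE ht _ R).congr' ?_
  filter_upwards [hne] with ε ⟨hε, htε⟩
  rw [hR ε hε htε, hK, add_sub_cancel_right]

/-- Degeneration of the sixth matrix Painlevé system to the fifth matrix Painlevé system
(confluence 22,22,22,211 → (2)(2),22,211). -/
theorem stmt19 (θ0 θ1 θi1 θi2 θi3 : ℂ)
    (hsum : 2 * θ0 + 2 * θ1 + 2 * θi1 + θi2 + θi3 = 0)
    (t : ℂ) (ht : t ≠ 0) :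
    ∃ c : ℂ → ℂ, ∀ Q P : Matrix (Fin 2) (Fin 2) ℂ,
      P * Q - Q * P = (θ0 + θ1 + θi1 + θi2) • Kmat →
      Tendsto (fun ε : ℂ =>
          ε * HVIMat θ0 (1 / ε) (θ1 - 1 / ε) θi1 θi2 (1 + ε * t)
              ((1 : Matrix (Fin 2) (Fin 2) ℂ) - ε • P) ((1 / ε) • Q)
            - c ε)
        (𝓝[≠] (0 : ℂ))
        (𝓝 (HVMat θ0 θ1 θi1 t Q P)) :=
  stmt19_general θ0 θ1 θi1 θi2 t ht
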